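/- An AME(6,5) state of minimal support exists, and for every integer n ≥ 7 no AME(n,5) state of minimal support exists; that is, N(5) = 6, where N(5) is the largest n for which an AME(n,5) state of minimal support exists. -/

import Mathlib

open scoped BigOperators Classical

noncomputable section

namespace AMEPaper

/-- Combine a configuration on the complement of `B` with a configuration on `B`
into a full configuration on `Fin n`. -/
def combine {n d : ℕ} (B : Finset (Fin n)) (a : {i : Fin n // i ∉ B} → Fin d)
    (b : {i : Fin n // i ∈ B} → Fin d) : Fin n → Fin d :=
  fun i => if h : i ∈ B then b ⟨i, h⟩ else a ⟨i, h⟩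

/-- `ψ` is an absolutely maximally entangled state with `n` sites and local dimension `d`:
it is a unit vector and, for every set `B` of at most `n/2` sites, the reduced density
matrix on `B` equals `d ^ (-|B|)` times the identity. -/
def IsAME (n d : ℕ) (ψ : (Fin n → Fin d) → ℂ) : Prop :=
  (∑ s : Fin n → Fin d, ‖ψ s‖ ^ 2 = 1) ∧
  ∀ B : Finset (Fin n), B.card ≤ n / 2 →
    ∀ b b' : {i : Fin n // i ∈ B} → Fin d,
      (∑ a : {i : Fin n // i ∉ B} → Fin d,
          ψ (combine B a b) * (starRingEnd ℂ) (ψ (combine B a b'))) =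
        if b = b' then ((d : ℂ) ^ B.card)⁻¹ else 0

/-- `ψ` has minimal support: its support in the computational basis has exactly
`d ^ ⌊n/2⌋` elements. -/
def HasMinimalSupport (n d : ℕ) (ψ : (Fin n → Fin d) → ℂ) : Prop :=
  {s : Fin n → Fin d | ψ s ≠ 0}.ncard = d ^ (n / 2)

/-- `C` is an MDS code over the alphabet `Fin d` with wordlength `n` and minimum
Hamming distance `δ`: its minimum distance is exactly `δ` and it meets the Singleton
bound, `|C| = d ^ (n - δ + 1)`. -/
def IsMDSCode (d n δ : ℕ) (C : Finset (Fin n → Fin d)) : Prop :=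
  C.card = d ^ (n - δ + 1) ∧
  (∀ w ∈ C, ∀ w' ∈ C, w ≠ w' → δ ≤ hammingDist w w') ∧
  (∃ w ∈ C, ∃ w' ∈ C, w ≠ w' ∧ hammingDist w w' = δ)

/-- A latin `k`-hypercube of order `d`: fixing all indices but any one of them, the
resulting map `Fin d → Fin d` is a bijection. -/
def IsLatinHypercube (k d : ℕ) (L : (Fin k → Fin d) → Fin d) : Prop :=
  ∀ (i : Fin k) (x : Fin k → Fin d),
    Function.Bijective fun v : Fin d => L (Function.update x i v)

/-- Two latin `k`-hypercubes are orthogonal if for every pair of distinct indices and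
all ways of fixing the remaining indices, the two resulting latin squares are
orthogonal. -/
def AreOrthogonalHypercubes (k d : ℕ) (L M : (Fin k → Fin d) → Fin d) : Prop :=
  ∀ (i j : Fin k), i ≠ j → ∀ x : Fin k → Fin d,
    Function.Injective fun p : Fin d × Fin d =>
      (L (Function.update (Function.update x i p.1) j p.2),
       M (Function.update (Function.update x i p.1) j p.2))

/-- A latin square of order `d`: every row and every column is a bijection. -/
def IsLatinSquare (d : ℕ) (L : Fin d × Fin d → Fin d) : Prop :=
  (∀ i : Fin d, Function.Bijective fun j => L (i, j)) ∧
  (∀ j : Fin d, Function.Bijective fun i => L (i, j))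

/-!
The support of a minimally supported `AME(n, d)` state is an orthogonal array of index one and
strength `⌊n/2⌋`: every diagonal entry of a reduced density matrix on `⌊n/2⌋` sites is nonzero,
so every pattern on those sites occurs, and counting shows it occurs once. Conversely the uniform
superposition over such an array is AME; the doubly extended Reed–Solomon code over `𝔽₅` is one
for `n = 6`. Puncturing or shortening passes from length `n + 1` to `n` keeping strength
`⌊n/2⌋`, so for `n ≥ 7` it suffices to exclude strength 3 and length 7 over 5 symbols. There two
distinct words agreeing somewhere agree in exactly two places, which yields a word `v` disagreeing
everywhere with a given word `u`; the words through `u 0`, `u 1` and the value of `v` at one of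
the five other places then pair those places off, impossible as five is odd.
-/

/-- An orthogonal array of strength `m` and index one; for `m ≤ n` this is an MDS code with
`d ^ m` words. -/
def IsOrthogonalArray {n d : ℕ} (m : ℕ) (C : Finset (Fin n → Fin d)) : Prop :=
  ∀ S : Finset (Fin n), S.card = m → ∀ f : Fin n → Fin d, ∃! w, w ∈ C ∧ ∀ i ∈ S, w i = f i

namespace IsOrthogonalArray

variable {n d m : ℕ} {C : Finset (Fin n → Fin d)}

theorem of_bijective
    (h : ∀ S : Finset (Fin n), S.card = m → Function.Bijective fun (w : C) (i : S) => w.1 i) :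
    IsOrthogonalArray m C := by
  intro S hS f
  obtain ⟨w, hw⟩ := (h S hS).2 fun i => f i
  refine ⟨w, ⟨w.2, fun i hi => congrFun hw ⟨i, hi⟩⟩, fun w' ⟨hw', hw'f⟩ => ?_⟩
  have : (⟨w', hw'⟩ : C) = w :=
    (h S hS).1 (funext fun i => (hw'f i i.2).trans (congrFun hw i).symm)
  exact congrArg Subtype.val this

theorem of_image {g : (Fin m → Fin d) → Fin n → Fin d}
    (hg : ∀ S : Finset (Fin n), S.card = m → ∀ p q, (∀ i ∈ S, g p i = g q i) → p = q) :
    IsOrthogonalArray m (Finset.univ.image g) := by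
  intro S hS f
  have hbij : Function.Bijective fun p (i : S) => g p i := by
    rw [Fintype.bijective_iff_injective_and_card]
    exact ⟨fun p q h => hg S hS p q fun i hi => congrFun h ⟨i, hi⟩, by simp [hS]⟩
  obtain ⟨p, hp⟩ := hbij.2 fun i => f i
  refine ⟨g p, ⟨Finset.mem_image_of_mem _ (Finset.mem_univ _),
    fun i hi => congrFun hp ⟨i, hi⟩⟩, ?_⟩
  rintro w ⟨hw, hwf⟩
  obtain ⟨q, -, rfl⟩ := Finset.mem_image.1 hw
  rw [hg S hS q p fun i hi => (hwf i hi).trans (congrFun hp ⟨i, hi⟩).symm]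

theorem eq_of_agree (hC : IsOrthogonalArray m C) {T : Finset (Fin n)} (hT : m ≤ T.card)
    {w w' : Fin n → Fin d} (hw : w ∈ C) (hw' : w' ∈ C) (h : ∀ i ∈ T, w i = w' i) :
    w = w' := by
  obtain ⟨S, hST, hS⟩ := Finset.exists_subset_card_eq hT
  exact (hC S hS w').unique ⟨hw, fun i hi => h i (hST hi)⟩ ⟨hw', fun _ _ => rfl⟩

theorem card_filter_agree (hC : IsOrthogonalArray m C) (hmn : m ≤ n) {B : Finset (Fin n)}
    (hB : B.card ≤ m) (f : Fin n → Fin d) :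
    (C.filter fun w => ∀ i ∈ B, w i = f i).card = d ^ (m - B.card) := by
  obtain ⟨S, hBS, hS⟩ := Finset.exists_superset_card_eq hB (by simpa using hmn)
  have : (C.filter fun w => ∀ i ∈ B, w i = f i).card = Fintype.card (↥(S \ B) → Fin d) := by
    rw [← Finset.card_univ]
    refine Finset.card_bij (fun w _ i => w i) (by simp) ?_ ?_
    · intro w hw w' hw' h
      simp only [Finset.mem_filter] at hw hw'
      refine hC.eq_of_agree hS.ge hw.1 hw'.1 fun i hi => ?_
      by_cases hiB : i ∈ B
      · rw [hw.2 i hiB, hw'.2 i hiB]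
      · exact congrFun h ⟨i, Finset.mem_sdiff.2 ⟨hi, hiB⟩⟩
    · intro g _
      obtain ⟨w, ⟨hw, hwf⟩, -⟩ := hC S hS fun i => if h : i ∈ S \ B then g ⟨i, h⟩ else f i
      refine ⟨w, Finset.mem_filter.2 ⟨hw, fun i hi => ?_⟩, funext fun i => ?_⟩
      · simpa [hi] using hwf i (hBS hi)
      · simpa [i.2] using hwf i (Finset.mem_sdiff.1 i.2).1
  rw [this, Fintype.card_fun, Fintype.card_coe, Finset.card_sdiff_of_subset hBS, hS,
    Fintype.card_fin]

theorem card_eq [NeZero d] (hC : IsOrthogonalArray m C) (hmn : m ≤ n) : C.card = d ^ m := by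
  simpa using hC.card_filter_agree hmn (B := ∅) (Nat.zero_le m) (fun _ => 0)

end IsOrthogonalArray

section UniformState

variable {n d : ℕ}

theorem card_filter_combine_mem (C : Finset (Fin n → Fin d)) (B : Finset (Fin n))
    (f : Fin n → Fin d) :
    (Finset.univ.filter fun a => combine B a (fun i => f i) ∈ C).card =
      (C.filter fun w => ∀ i ∈ B, w i = f i).card := by
  refine Finset.card_bij' (fun a _ => combine B a fun i => f i) (fun w _ i => w i)
    ?_ ?_ ?_ ?_
  · intro a ha
    simp only [Finset.mem_filter, Finset.mem_univ, true_and] at ha ⊢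
    exact ⟨ha, fun i hi => by simp [combine, hi]⟩
  · intro w hw
    simp only [Finset.mem_filter, Finset.mem_univ, true_and] at hw ⊢
    convert hw.1
    funext i
    by_cases hi : i ∈ B <;> simp [combine, hi, hw.2]
  · intro a _
    funext i
    simp [combine, i.2]
  · intro w hw
    funext i
    by_cases hi : i ∈ B <;> simp [combine, hi, (Finset.mem_filter.1 hw).2]

theorem IsOrthogonalArray.eq_of_combine_mem {m : ℕ} {C : Finset (Fin n → Fin d)}
    (hC : IsOrthogonalArray m C) {B : Finset (Fin n)} (hB : m + B.card ≤ n)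
    {a : {i // i ∉ B} → Fin d} {b b' : {i // i ∈ B} → Fin d}
    (hb : combine B a b ∈ C) (hb' : combine B a b' ∈ C) : b = b' := by
  have hBc : m ≤ Bᶜ.card := by rw [Finset.card_compl, Fintype.card_fin]; omega
  have := hC.eq_of_agree hBc hb hb' fun i hi => by
    simp [combine, Finset.mem_compl.1 hi]
  funext i
  simpa [combine, i.2] using congrFun this i

def uniformState (C : Finset (Fin n → Fin d)) : (Fin n → Fin d) → ℂ :=
  fun s => if s ∈ C then ((Real.sqrt C.card)⁻¹ : ℝ) else 0

theorem uniformState_mul_conj (C : Finset (Fin n → Fin d)) (s t : Fin n → Fin d) :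
    uniformState C s * starRingEnd ℂ (uniformState C t) =
      if s ∈ C ∧ t ∈ C then (C.card : ℂ)⁻¹ else 0 := by
  by_cases hs : s ∈ C <;> by_cases ht : t ∈ C <;>
    simp only [uniformState, hs, ht, and_self, and_true, and_false, if_true, if_false, map_zero,
      mul_zero, zero_mul]
  rw [Complex.conj_ofReal, ← Complex.ofReal_mul, ← mul_inv,
    Real.mul_self_sqrt (Nat.cast_nonneg _), Complex.ofReal_inv, Complex.ofReal_natCast]

theorem isAME_uniformState [NeZero d] {C : Finset (Fin n → Fin d)}
    (hC : IsOrthogonalArray (n / 2) C) : IsAME n d (uniformState C) := by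
  have hcard := hC.card_eq (Nat.div_le_self n 2)
  refine ⟨?_, fun B hB b b' => ?_⟩
  · have hnorm : ∀ s, ‖uniformState C s‖ ^ 2 = if s ∈ C then (C.card : ℝ)⁻¹ else 0 := by
      intro s
      by_cases hs : s ∈ C <;> simp [uniformState, hs]
    simp only [hnorm, Finset.sum_ite_mem, Finset.univ_inter, Finset.sum_const, nsmul_eq_mul]
    rw [hcard]
    push_cast
    exact mul_inv_cancel₀ (pow_ne_zero _ (Nat.cast_ne_zero.2 (NeZero.ne d)))
  · simp_rw [uniformState_mul_conj]
    split_ifs with hbb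
    · subst hbb
      obtain ⟨f, rfl⟩ : ∃ f : Fin n → Fin d, (fun i : B => f i) = b :=
        ⟨combine B 0 b, funext fun i => by simp [combine, i.2]⟩
      rw [Finset.sum_ite, Finset.sum_const_zero, add_zero, Finset.sum_const, nsmul_eq_mul]
      obtain ⟨k, hk⟩ : ∃ k, n / 2 = k + B.card := ⟨n / 2 - B.card, by omega⟩
      rw [Finset.filter_congr fun _ _ => and_self_iff, card_filter_combine_mem,
        hC.card_filter_agree (Nat.div_le_self n 2) hB, hcard, hk, Nat.add_sub_cancel, pow_add]
      have hd : (d : ℂ) ≠ 0 := Nat.cast_ne_zero.2 (NeZero.ne d)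
      push_cast
      field_simp
    · refine Finset.sum_eq_zero fun a _ => if_neg fun h => hbb ?_
      exact hC.eq_of_combine_mem (by omega) h.1 h.2

theorem hasMinimalSupport_uniformState [NeZero d] {C : Finset (Fin n → Fin d)}
    (hC : IsOrthogonalArray (n / 2) C) : HasMinimalSupport n d (uniformState C) := by
  have : {s | uniformState C s ≠ 0} = C := by
    ext s
    by_cases hs : s ∈ C
    · simp [uniformState, hs, Finset.ne_empty_of_mem hs]
    · simp [uniformState, hs]
  rw [HasMinimalSupport, this, Set.ncard_coe_finset, hC.card_eq (Nat.div_le_self n 2)]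

end UniformState

theorem IsAME.exists_combine_ne_zero {n d : ℕ} [NeZero d] {ψ : (Fin n → Fin d) → ℂ}
    (hA : IsAME n d ψ) {B : Finset (Fin n)} (hB : B.card ≤ n / 2) (b : {i // i ∈ B} → Fin d) :
    ∃ a, ψ (combine B a b) ≠ 0 := by
  by_contra! h
  have := hA.2 B hB b b
  simp only [h, zero_mul, Finset.sum_const_zero, if_true] at this
  exact inv_ne_zero (pow_ne_zero _ (Nat.cast_ne_zero.2 (NeZero.ne d))) this.symm

theorem isOrthogonalArray_support {n d : ℕ} [NeZero d] {ψ : (Fin n → Fin d) → ℂ}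
    (hA : IsAME n d ψ) (hψ : HasMinimalSupport n d ψ) :
    IsOrthogonalArray (n / 2) (Finset.univ.filter fun s => ψ s ≠ 0) := by
  refine IsOrthogonalArray.of_bijective fun S hS => ?_
  rw [Fintype.bijective_iff_surjective_and_card]
  refine ⟨fun b => ?_, ?_⟩
  · obtain ⟨a, ha⟩ := hA.exists_combine_ne_zero hS.le b
    exact ⟨⟨combine S a b, by simpa using ha⟩, funext fun i => by simp [combine, i.2]⟩
  · rw [Fintype.card_coe, ← Set.ncard_coe_finset, Fintype.card_fun, Fintype.card_coe, hS,
      Fintype.card_fin, ← hψ, Finset.coe_filter]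
    simp

/-- Evaluations of `p 0 + p 1 t + p 2 t²` at `t = 0, …, 4` and at infinity (the leading
coefficient): the doubly extended Reed–Solomon code of length 6 and dimension 3 over `𝔽₅`. -/
def reedSolomon (p : Fin 3 → Fin 5) : Fin 6 → Fin 5 :=
  ![p 0, p 0 + p 1 + p 2, p 0 + 2 * p 1 + 4 * p 2, p 0 + 3 * p 1 + 4 * p 2, p 0 + 4 * p 1 + p 2,
    p 2]

theorem reedSolomon_sub (p q : Fin 3 → Fin 5) :
    reedSolomon p - reedSolomon q = reedSolomon (p - q) := by
  funext i
  fin_cases i <;>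
    simp only [reedSolomon, Pi.sub_apply, Fin.reduceFinMk, Fin.zero_eta, Fin.mk_one,
      Matrix.cons_val] <;>
    grind

set_option maxRecDepth 10000 in
theorem card_filter_reedSolomon_eq_zero_le_two :
    ∀ p : Fin 3 → Fin 5, p ≠ 0 → (Finset.univ.filter fun i => reedSolomon p i = 0).card ≤ 2 := by
  decide

theorem reedSolomon_eq_of_agree {S : Finset (Fin 6)} (hS : 3 ≤ S.card) {p q : Fin 3 → Fin 5}
    (h : ∀ i ∈ S, reedSolomon p i = reedSolomon q i) : p = q := by
  by_contra hpq
  have hzero : S ⊆ Finset.univ.filter fun i => reedSolomon (p - q) i = 0 := fun i hi => by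
    simp [← reedSolomon_sub, h i hi]
  have := card_filter_reedSolomon_eq_zero_le_two (p - q) (sub_ne_zero.2 hpq)
  have := Finset.card_le_card hzero
  omega

theorem isOrthogonalArray_reedSolomon : IsOrthogonalArray 3 (Finset.univ.image reedSolomon) :=
  IsOrthogonalArray.of_image fun _ hS _ _ => reedSolomon_eq_of_agree hS.ge

theorem IsOrthogonalArray.restrict {n n' d m k : ℕ} {C : Finset (Fin n' → Fin d)}
    (hC : IsOrthogonalArray (m + k) C) {e : Fin n → Fin n'} (he : Function.Injective e)
    {T : Finset (Fin n')} (hT : T.card = k) (hTe : ∀ i, e i ∉ T) (g : Fin n' → Fin d) :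
    IsOrthogonalArray m ((C.filter fun w => ∀ t ∈ T, w t = g t).image (· ∘ e)) := by
  intro S hS f
  have hdisj : Disjoint (S.map ⟨e, he⟩) T :=
    Finset.disjoint_left.2 fun t ht => by
      obtain ⟨i, -, rfl⟩ := Finset.mem_map.1 ht
      exact hTe i
  have hextend : ∀ t ∈ T, Function.extend e f g t = g t := fun t ht =>
    Function.extend_apply' _ _ _ fun ⟨i, hi⟩ => hTe i (hi ▸ ht)
  obtain ⟨w, ⟨hwC, hwf⟩, hwu⟩ := hC (S.map ⟨e, he⟩ ∪ T)
    (by rw [Finset.card_union_of_disjoint hdisj, Finset.card_map, hS, hT]) (Function.extend e f g)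
  refine ⟨w ∘ e, ⟨Finset.mem_image_of_mem _ (Finset.mem_filter.2 ⟨hwC, fun t ht => ?_⟩),
    fun i hi => ?_⟩, ?_⟩
  · rw [hwf t (Finset.mem_union_right _ ht), hextend t ht]
  · rw [Function.comp_apply, hwf (e i) (Finset.mem_union_left _ (Finset.mem_map_of_mem _ hi)),
      he.extend_apply]
  · rintro _ ⟨hw', hw'f⟩
    obtain ⟨w', hw'C, rfl⟩ := Finset.mem_image.1 hw'
    rw [Finset.mem_filter] at hw'C
    rw [hwu w' ⟨hw'C.1, fun t ht => ?_⟩]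
    rcases Finset.mem_union.1 ht with ht | ht
    · obtain ⟨i, hi, rfl⟩ := Finset.mem_map.1 ht
      exact (hw'f i hi).trans (he.extend_apply f g i).symm
    · rw [hw'C.2 t ht, hextend t ht]

theorem IsOrthogonalArray.exists_of_length_succ {n d : ℕ} [NeZero d]
    {C : Finset (Fin (n + 1) → Fin d)}
    (hC : IsOrthogonalArray ((n + 1) / 2) C) :
    ∃ C' : Finset (Fin n → Fin d), IsOrthogonalArray (n / 2) C' := by
  rcases Nat.even_or_odd n with hn | hn
  · have hm : (n + 1) / 2 = n / 2 + 0 := by rcases hn with ⟨r, rfl⟩; omega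
    rw [hm] at hC
    exact ⟨_, hC.restrict (Fin.castSucc_injective n) Finset.card_empty (by simp) 0⟩
  · have hm : (n + 1) / 2 = n / 2 + 1 := by rcases hn with ⟨r, rfl⟩; omega
    rw [hm] at hC
    exact ⟨_, hC.restrict (Fin.castSucc_injective n) (Finset.card_singleton (Fin.last n))
      (by simp [Fin.castSucc_ne_last]) 0⟩

theorem _root_.Function.Involutive.exists_fixed_point_of_odd_card {α : Type*} [Fintype α]
    (hα : Odd (Fintype.card α)) {f : α → α} (hf : Function.Involutive f) : ∃ a, f a = a := by
  have : Fact (Nat.Prime 2) := ⟨Nat.prime_two⟩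
  refine Equiv.Perm.exists_fixed_point_of_prime (p := 2) (n := 1) (σ := hf.toPerm f)
    hα.not_two_dvd_nat ?_
  ext a
  simp [pow_succ, hf a]

namespace IsOrthogonalArray

variable {C : Finset (Fin 7 → Fin 5)}

theorem existsUnique_three (hC : IsOrthogonalArray 3 C) {i j k : Fin 7} (hij : i ≠ j)
    (hik : i ≠ k) (hjk : j ≠ k) (a b c : Fin 5) :
    ∃! w, w ∈ C ∧ w i = a ∧ w j = b ∧ w k = c := by
  have h := hC {i, j, k} (Finset.card_eq_three.2 ⟨i, j, k, hij, hik, hjk, rfl⟩)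
    (Function.update (Function.update (fun _ => c) j b) i a)
  simpa [Function.update_apply, hij, hik, hjk, hij.symm, hik.symm, hjk.symm] using h

theorem eq_of_agree_three (hC : IsOrthogonalArray 3 C) {i j k : Fin 7} (hij : i ≠ j)
    (hik : i ≠ k) (hjk : j ≠ k) {w w' : Fin 7 → Fin 5} (hw : w ∈ C) (hw' : w' ∈ C)
    (hi : w i = w' i) (hj : w j = w' j) (hk : w k = w' k) : w = w' :=
  hC.eq_of_agree (T := {i, j, k}) (Finset.card_eq_three.2 ⟨i, j, k, hij, hik, hjk, rfl⟩).ge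
    hw hw' (by simp [hi, hj, hk])

theorem exists_ne_agree_of_agree (hC : IsOrthogonalArray 3 C) {u w : Fin 7 → Fin 5} (hu : u ∈ C)
    (hw : w ∈ C) (hwu : w ≠ u) {i : Fin 7} (hi : w i = u i) : ∃ j ≠ i, w j = u j := by
  -- `24 = 6 * 4`: the other words agreeing with `u` at `i` and at one more place `j` already
  -- exhaust the `24` other words agreeing with `u` at `i`
  have hcard (B : Finset (Fin 7)) (hB : B.card ≤ 3) (hiB : i ∈ B) :
      ((C.filter fun x => ∀ t ∈ B, x t = u t).erase u).card = 5 ^ (3 - B.card) - 1 := by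
    rw [Finset.card_erase_of_mem (by simp [hu]), hC.card_filter_agree (by norm_num) hB]
  set T := (C.filter fun x => ∀ t ∈ ({i} : Finset (Fin 7)), x t = u t).erase u
  set U := (Finset.univ.erase i).biUnion fun j =>
    (C.filter fun x => ∀ t ∈ ({i, j} : Finset (Fin 7)), x t = u t).erase u
  have hT : T.card = 24 := by
    rw [hcard _ (by simp) (Finset.mem_singleton_self i), Finset.card_singleton]
    rfl
  have hU : U.card = 24 := by
    rw [Finset.card_biUnion]
    · have hpair : ∀ j ∈ Finset.univ.erase i,
          ((C.filter fun x => ∀ t ∈ ({i, j} : Finset (Fin 7)), x t = u t).erase u).card = 4 := by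
        intro j hj
        rw [hcard _ (by simp [Finset.card_pair (Finset.ne_of_mem_erase hj).symm]) (by simp),
          Finset.card_pair (Finset.ne_of_mem_erase hj).symm]
        rfl
      rw [Finset.sum_congr rfl hpair]
      simp
    · intro j hj j' hj' hjj'
      refine Finset.disjoint_left.2 fun x hx hx' => Finset.ne_of_mem_erase hx ?_
      simp only [Finset.mem_erase, Finset.mem_filter, Finset.mem_insert, Finset.mem_singleton,
        forall_eq_or_imp, forall_eq] at hx hx'
      exact hC.eq_of_agree_three (Finset.ne_of_mem_erase hj).symm
        (Finset.ne_of_mem_erase hj').symm hjj' hx.2.1 hu hx.2.2.1 hx.2.2.2 hx'.2.2.2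
  have hUT : U ⊆ T := by
    intro x hx
    obtain ⟨j, -, hx⟩ := Finset.mem_biUnion.1 hx
    simp only [T, Finset.mem_erase, Finset.mem_filter, Finset.mem_insert, Finset.mem_singleton,
      forall_eq_or_imp, forall_eq] at hx ⊢
    exact ⟨hx.1, hx.2.1, hx.2.2.1⟩
  have hwU : w ∈ U := by
    rw [Finset.eq_of_subset_of_card_le hUT (by omega)]
    simp [T, hw, hwu, hi]
  obtain ⟨j, hj, hwj⟩ := Finset.mem_biUnion.1 hwU
  simp only [Finset.mem_erase, Finset.mem_filter, Finset.mem_insert, Finset.mem_singleton,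
    forall_eq_or_imp, forall_eq] at hwj
  exact ⟨j, Finset.ne_of_mem_erase hj, hwj.2.2.2⟩

theorem exists_forall_ne (hC : IsOrthogonalArray 3 C) {u : Fin 7 → Fin 5} (hu : u ∈ C) :
    ∃ v ∈ C, ∀ i, v i ≠ u i := by
  set P := (Finset.univ.powersetCard 2).biUnion fun B => C.filter fun x => ∀ t ∈ B, x t = u t
  have hpair : ∀ B ∈ Finset.univ.powersetCard 2,
      (C.filter fun x => ∀ t ∈ B, x t = u t).card = 5 := by
    intro B hB
    have hB2 := (Finset.mem_powersetCard.1 hB).2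
    rw [hC.card_filter_agree (by norm_num) (by omega), hB2]
    rfl
  have hP : P.card < C.card := by
    calc P.card ≤ ∑ B ∈ Finset.univ.powersetCard 2, (C.filter fun x => ∀ t ∈ B, x t = u t).card :=
          Finset.card_biUnion_le
      _ = 105 := by rw [Finset.sum_congr rfl hpair]; simp [Nat.choose]
      _ < C.card := by rw [hC.card_eq (by norm_num)]; norm_num
  obtain ⟨v, hv, hvP⟩ := Finset.exists_mem_notMem_of_card_lt_card hP
  refine ⟨v, hv, fun i hvi => hvP (Finset.mem_biUnion.2 ?_)⟩
  by_cases hvu : v = u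
  · exact ⟨{0, 1}, by simp [Finset.mem_powersetCard], by simp [hu, hvu]⟩
  · obtain ⟨j, hji, hvj⟩ := hC.exists_ne_agree_of_agree hu hv hvu hvi
    refine ⟨{i, j}, by simp [Finset.mem_powersetCard, Finset.card_pair hji.symm], ?_⟩
    simp [hv, hvi, hvj]

end IsOrthogonalArray

theorem not_isOrthogonalArray_seven_three (C : Finset (Fin 7 → Fin 5)) :
    ¬ IsOrthogonalArray 3 C := by
  intro hC
  obtain ⟨u, hu⟩ : C.Nonempty := Finset.card_pos.1 (by rw [hC.card_eq (by norm_num)]; norm_num)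
  obtain ⟨v, hv, hvu⟩ := hC.exists_forall_ne hu
  set e : Fin 5 → Fin 7 := fun k => k.succ.succ
  have he : Function.Injective e := (Fin.succ_injective _).comp (Fin.succ_injective _)
  have he0 (k : Fin 5) : e k ≠ 0 := Fin.succ_ne_zero _
  have he1 (k : Fin 5) : e k ≠ 1 := fun h => Fin.succ_ne_zero k (Fin.succ_injective _ h)
  have hw (k : Fin 5) : ∃! x, x ∈ C ∧ x 0 = u 0 ∧ x 1 = u 1 ∧ x (e k) = v (e k) :=
    hC.existsUnique_three zero_ne_one (he0 k).symm (he1 k).symm (u 0) (u 1) (v (e k))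
  choose w hwC hw0 hw1 hwk using fun k => (hw k).exists
  have hwv (k : Fin 5) : w k ≠ v := fun h => hvu 0 (h ▸ hw0 k)
  -- `w k` meets `v` at `e k`, hence at a second coordinate, which cannot be `0` or `1`
  have hσ (k : Fin 5) : ∃ k' ≠ k, w k (e k') = v (e k') := by
    obtain ⟨j, hjk, hj⟩ := hC.exists_ne_agree_of_agree hv (hwC k) (hwv k) (hwk k)
    have hj0 : j ≠ 0 := fun h => hvu 0 (by subst h; exact hj.symm.trans (hw0 k))
    obtain ⟨j, rfl⟩ := Fin.exists_succ_eq.2 hj0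
    have hj1 : j ≠ 0 := fun h => hvu 1 (by subst h; exact hj.symm.trans (hw1 k))
    obtain ⟨k', rfl⟩ := Fin.exists_succ_eq.2 hj1
    exact ⟨k', fun h => hjk (h ▸ rfl), hj⟩
  choose σ hσk hσ using hσ
  have hwσ (k : Fin 5) : w (σ k) = w k :=
    (hw (σ k)).unique ⟨hwC _, hw0 _, hw1 _, hwk _⟩ ⟨hwC k, hw0 k, hw1 k, hσ k⟩
  have hinv : Function.Involutive σ := fun k => by
    by_contra h
    exact hwv k (hC.eq_of_agree_three (he.ne (hσk k).symm) (he.ne (Ne.symm h))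
      (he.ne (hσk (σ k)).symm) (hwC k) hv (hwk k) (hσ k) (hwσ k ▸ hσ (σ k)))
  obtain ⟨k, hk⟩ := hinv.exists_fixed_point_of_odd_card (by decide)
  exact hσk k hk

theorem not_isOrthogonalArray_half {n : ℕ} (hn : 7 ≤ n) :
    ∀ C : Finset (Fin n → Fin 5), ¬ IsOrthogonalArray (n / 2) C := by
  induction n, hn using Nat.le_induction with
  | base => exact not_isOrthogonalArray_seven_three
  | succ n _ ih =>
    intro C hC
    obtain ⟨C', hC'⟩ := hC.exists_of_length_succ
    exact ih C' hC'

/-- `𝒩(5) = 6`: a minimally supported `AME(6,5)` state exists, and no minimally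
supported `AME(n,5)` state exists for `n ≥ 7`. -/
theorem N_five_eq_six :
    (∃ ψ : (Fin 6 → Fin 5) → ℂ, IsAME 6 5 ψ ∧ HasMinimalSupport 6 5 ψ) ∧
    (∀ n : ℕ, 7 ≤ n →
      ¬ ∃ ψ : (Fin n → Fin 5) → ℂ, IsAME n 5 ψ ∧ HasMinimalSupport n 5 ψ) := by
  refine ⟨⟨uniformState _, isAME_uniformState isOrthogonalArray_reedSolomon,
    hasMinimalSupport_uniformState isOrthogonalArray_reedSolomon⟩, ?_⟩
  rintro n hn ⟨ψ, hA, hψ⟩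
  exact not_isOrthogonalArray_half hn _ (isOrthogonalArray_support hA hψ)

end AMEPaper
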